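/- Let Λ be a finitely aligned P-graph, λ ∈ Λ, U a filter with r(U) = s(λ), and V a filter containing λ. Then λ*·(λ·U) = U and λ·(λ*·V) = V. -/

import Mathlib

universe u

/-- A quasi-lattice ordered group in the sense of Nica: a (discrete) group `G` together
with a subsemigroup `P` containing the identity with `P ∩ P⁻¹ = {1}`, such that under the
partial order `p ≤ q ↔ p⁻¹ * q ∈ P`, any pair of elements of `G` with a common upper bound
in `P` has a least common upper bound in `P`. -/
structure QLOGroup (G : Type u) [Group G] where
  P : Set G
  one_mem : (1 : G) ∈ P
  mul_mem : ∀ {p q : G}, p ∈ P → q ∈ P → p * q ∈ P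
  eq_one_of_mem_inv_mem : ∀ p : G, p ∈ P → p⁻¹ ∈ P → p = 1
  lub_exists : ∀ p q : G, (∃ r ∈ P, p⁻¹ * r ∈ P ∧ q⁻¹ * r ∈ P) →
    ∃ r ∈ P, p⁻¹ * r ∈ P ∧ q⁻¹ * r ∈ P ∧
      ∀ s ∈ P, p⁻¹ * s ∈ P → q⁻¹ * s ∈ P → r⁻¹ * s ∈ P

namespace QLOGroup

variable {G : Type u} [Group G]

/-- The left-invariant partial order on `G` induced by `P`. -/
def le (Q : QLOGroup G) (p q : G) : Prop := p⁻¹ * q ∈ Q.P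

/-- `s` is the least common upper bound in `P` of `p` and `q` (i.e. `s = p ∨ q < ∞`). -/
def IsLub (Q : QLOGroup G) (p q s : G) : Prop :=
  s ∈ Q.P ∧ Q.le p s ∧ Q.le q s ∧ ∀ t ∈ Q.P, Q.le p t → Q.le q t → Q.le s t

/-- `s` is the least upper bound in `P` of the set `A` (i.e. `s = ∨A < ∞`). -/
def IsLubSet (Q : QLOGroup G) (A : Set G) (s : G) : Prop :=
  s ∈ Q.P ∧ (∀ a ∈ A, Q.le a s) ∧ ∀ t ∈ Q.P, (∀ a ∈ A, Q.le a t) → Q.le s t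

/-- `p` and `q` have a common upper bound in `P` (i.e. `p ∨ q < ∞`). -/
def HasLub (Q : QLOGroup G) (p q : G) : Prop := ∃ s, Q.IsLub p q s

/-- A subset `F` is `∨`-closed if whenever `p, q ∈ F` have `p ∨ q < ∞`, then `p ∨ q ∈ F`. -/
def VeeClosed (Q : QLOGroup G) (F : Set G) : Prop :=
  ∀ p ∈ F, ∀ q ∈ F, ∀ s, Q.IsLub p q s → s ∈ F

/-- `F̄ = {∨A : A ⊆ F, A ≠ ∅, ∨A ≠ ∞}`. -/
def veeClosure (Q : QLOGroup G) (F : Set G) : Set G :=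
  {s | ∃ A ⊆ F, A.Nonempty ∧ Q.IsLubSet A s}

end QLOGroup

/-- A `P`-graph for a quasi-lattice ordered group `(G,P)`: a countable category with a
degree functor `d` into `P` satisfying the unique factorisation property.  Composition is
written in the path order of Raeburn-Sims: `comp μ ν` is defined when `s(μ) = r(ν)` (with
`src = s = dom` and `tgt = r = cod`), and `comp` is a total function whose axioms are only
imposed on composable pairs. -/
structure PGraph {G : Type u} [Group G] (Q : QLOGroup G) where
  Obj : Type
  Mor : Type
  countable_mor : Countable Mor
  src : Mor → Obj
  tgt : Mor → Obj
  ident : Obj → Mor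
  comp : Mor → Mor → Mor
  src_ident : ∀ v, src (ident v) = v
  tgt_ident : ∀ v, tgt (ident v) = v
  src_comp : ∀ μ ν, src μ = tgt ν → src (comp μ ν) = src ν
  tgt_comp : ∀ μ ν, src μ = tgt ν → tgt (comp μ ν) = tgt μ
  id_comp : ∀ μ, comp (ident (tgt μ)) μ = μ
  comp_id : ∀ μ, comp μ (ident (src μ)) = μ
  comp_assoc : ∀ μ ν ρ, src μ = tgt ν → src ν = tgt ρ →
    comp (comp μ ν) ρ = comp μ (comp ν ρ)
  d : Mor → G
  d_mem : ∀ μ, d μ ∈ Q.P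
  d_ident : ∀ v, d (ident v) = 1
  d_comp : ∀ μ ν, src μ = tgt ν → d (comp μ ν) = d μ * d ν
  factorisation : ∀ (lam : Mor) (p q : G), p ∈ Q.P → q ∈ Q.P → d lam = p * q →
    ∃! mn : Mor × Mor, src mn.1 = tgt mn.2 ∧ lam = comp mn.1 mn.2 ∧ d mn.1 = p ∧ d mn.2 = q

namespace PGraph

variable {G : Type u} [Group G] {Q : QLOGroup G} (Λ : PGraph Q)

/-- The prefix order: `λ ⪯ μ` iff `μ = λμ'` for some `μ'`. -/
def PrefixLe (lam mu : Λ.Mor) : Prop :=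
  ∃ tail, Λ.src lam = Λ.tgt tail ∧ mu = Λ.comp lam tail

/-- The set of minimal common extensions of `μ` and `ν`. -/
def MCE (mu nu : Λ.Mor) : Set Λ.Mor :=
  {lam | Λ.PrefixLe mu lam ∧ Λ.PrefixLe nu lam ∧ Q.IsLub (Λ.d mu) (Λ.d nu) (Λ.d lam)}

/-- `Λ` is finitely aligned if all the sets `MCE(μ,ν)` are finite. -/
def FinitelyAligned : Prop := ∀ mu nu : Λ.Mor, (Λ.MCE mu nu).Finite

/-- A filter of `Λ`: a nonempty subset that is downward closed (F1) and upward
directed (F2) for the prefix order. -/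
def IsGraphFilter (U : Set Λ.Mor) : Prop :=
  U.Nonempty ∧ (∀ mu ∈ U, ∀ lam, Λ.PrefixLe lam mu → lam ∈ U) ∧
    (∀ mu ∈ U, ∀ nu ∈ U, ∃ lam ∈ U, Λ.PrefixLe mu lam ∧ Λ.PrefixLe nu lam)

/-- An ultrafilter of `Λ`: a filter maximal under inclusion. -/
def IsGraphUltrafilter (U : Set Λ.Mor) : Prop :=
  Λ.IsGraphFilter U ∧ ∀ V, Λ.IsGraphFilter V → U ⊆ V → U = V

/-- `λ·U = ⋃_{μ ∈ U} {α : α ⪯ λμ}`. -/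
def actFwd (lam : Λ.Mor) (U : Set Λ.Mor) : Set Λ.Mor :=
  {a | ∃ mu ∈ U, Λ.PrefixLe a (Λ.comp lam mu)}

/-- `λ*·V = {μ : λμ ∈ V}`. -/
def actBwd (lam : Λ.Mor) (V : Set Λ.Mor) : Set Λ.Mor :=
  {mu | Λ.src lam = Λ.tgt mu ∧ Λ.comp lam mu ∈ V}

/-- `(μ,ν)` is a balanced pair: `s(μ) = s(ν)` and `d(μ) = d(ν)`. -/
def Balanced (mu nu : Λ.Mor) : Prop := Λ.src mu = Λ.src nu ∧ Λ.d mu = Λ.d nu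

/-- The pairs `(α,β)` with `να = ξβ ∈ MCE(ν,ξ)`. -/
def MCEpairs (nu xi : Λ.Mor) : Set (Λ.Mor × Λ.Mor) :=
  {p | Λ.src nu = Λ.tgt p.1 ∧ Λ.src xi = Λ.tgt p.2 ∧
    Λ.comp nu p.1 = Λ.comp xi p.2 ∧ Λ.comp nu p.1 ∈ Λ.MCE nu xi}

end PGraph


namespace PGraph

variable {G : Type u} [Group G] {Q : QLOGroup G} (Λ : PGraph Q)

theorem prefixLe_refl (a : Λ.Mor) : Λ.PrefixLe a a :=
  ⟨Λ.ident (Λ.src a), (Λ.tgt_ident _).symm, (Λ.comp_id a).symm⟩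

theorem tgt_eq_of_prefixLe {a b : Λ.Mor} (h : Λ.PrefixLe a b) : Λ.tgt b = Λ.tgt a := by
  obtain ⟨tail, hc, rfl⟩ := h
  exact Λ.tgt_comp _ _ hc

/-- Left cancellation, from uniqueness in the factorisation property. -/
theorem comp_left_cancel {lam μ ν : Λ.Mor} (hμ : Λ.src lam = Λ.tgt μ)
    (hν : Λ.src lam = Λ.tgt ν) (h : Λ.comp lam μ = Λ.comp lam ν) : μ = ν := by
  have hd : Λ.d ν = Λ.d μ := by
    have := congrArg Λ.d h
    rw [Λ.d_comp _ _ hμ, Λ.d_comp _ _ hν] at this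
    exact (mul_left_cancel this).symm
  obtain ⟨_, _, huniq⟩ := Λ.factorisation (Λ.comp lam μ) (Λ.d lam) (Λ.d μ)
    (Λ.d_mem lam) (Λ.d_mem μ) (Λ.d_comp lam μ hμ)
  have h₁ := huniq (lam, μ) ⟨hμ, rfl, rfl, rfl⟩
  have h₂ := huniq (lam, ν) ⟨hν, h, rfl, hd⟩
  exact congrArg Prod.snd (h₁.trans h₂.symm)

theorem prefixLe_of_comp_prefixLe_comp {lam μ ν : Λ.Mor} (hμ : Λ.src lam = Λ.tgt μ)
    (hν : Λ.src lam = Λ.tgt ν) (h : Λ.PrefixLe (Λ.comp lam ν) (Λ.comp lam μ)) :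
    Λ.PrefixLe ν μ := by
  obtain ⟨tail, hct, heq⟩ := h
  have hνt : Λ.src ν = Λ.tgt tail := (Λ.src_comp lam ν hν).symm.trans hct
  refine ⟨tail, hνt, Λ.comp_left_cancel hμ ?_ ?_⟩
  · rw [Λ.tgt_comp ν tail hνt]; exact hν
  · rw [heq, Λ.comp_assoc lam ν tail hν hνt]

variable {Λ}

theorem IsGraphFilter.mem_of_prefixLe {U : Set Λ.Mor} (hU : Λ.IsGraphFilter U)
    {a b : Λ.Mor} (hb : b ∈ U) (hab : Λ.PrefixLe a b) : a ∈ U :=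
  hU.2.1 b hb a hab

/-- Any two members of a filter have a common extension (F2), hence the same range. -/
theorem IsGraphFilter.tgt_eq {U : Set Λ.Mor} (hU : Λ.IsGraphFilter U) {v : Λ.Obj}
    (hv : Λ.ident v ∈ U) {μ : Λ.Mor} (hμ : μ ∈ U) : Λ.tgt μ = v := by
  obtain ⟨ξ, -, hμξ, hvξ⟩ := hU.2.2 μ hμ (Λ.ident v) hv
  rw [← Λ.tgt_eq_of_prefixLe hμξ, Λ.tgt_eq_of_prefixLe hvξ, Λ.tgt_ident]

theorem actBwd_actFwd {lam : Λ.Mor} {U : Set Λ.Mor} (hU : Λ.IsGraphFilter U)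
    (hlamU : Λ.ident (Λ.src lam) ∈ U) : Λ.actBwd lam (Λ.actFwd lam U) = U := by
  have hrange : ∀ μ ∈ U, Λ.src lam = Λ.tgt μ := fun μ hμ => (hU.tgt_eq hlamU hμ).symm
  ext ν
  constructor
  · rintro ⟨hν, μ, hμU, hpre⟩
    exact hU.mem_of_prefixLe hμU
      (Λ.prefixLe_of_comp_prefixLe_comp (hrange μ hμU) hν hpre)
  · intro hν
    exact ⟨hrange ν hν, ν, hν, Λ.prefixLe_refl _⟩

theorem actFwd_actBwd {lam : Λ.Mor} {V : Set Λ.Mor} (hV : Λ.IsGraphFilter V)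
    (hlamV : lam ∈ V) : Λ.actFwd lam (Λ.actBwd lam V) = V := by
  ext ν
  constructor
  · rintro ⟨μ, ⟨-, hμV⟩, hpre⟩
    exact hV.mem_of_prefixLe hμV hpre
  · intro hν
    obtain ⟨ξ, hξV, ⟨μ, hμ, rfl⟩, hνξ⟩ := hV.2.2 lam hlamV ν hν
    exact ⟨μ, ⟨hμ, hξV⟩, hνξ⟩

end PGraph

theorem stmt7_general {G : Type u} [Group G] {Q : QLOGroup G} (Λ : PGraph Q)
    (lam : Λ.Mor) :
    (∀ U : Set Λ.Mor, Λ.IsGraphFilter U → Λ.ident (Λ.src lam) ∈ U →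
      Λ.actBwd lam (Λ.actFwd lam U) = U) ∧
    (∀ V : Set Λ.Mor, Λ.IsGraphFilter V → lam ∈ V →
      Λ.actFwd lam (Λ.actBwd lam V) = V) :=
  ⟨fun _ hU hlamU => PGraph.actBwd_actFwd hU hlamU,
    fun _ hV hlamV => PGraph.actFwd_actBwd hV hlamV⟩

/-- For a filter `U` with `r(U) = s(λ)` and a filter `V` containing `λ`,
`λ*·(λ·U) = U` and `λ·(λ*·V) = V`. -/
theorem stmt7 {G : Type u} [Group G] {Q : QLOGroup G} (Λ : PGraph Q)
    (hFA : Λ.FinitelyAligned) (lam : Λ.Mor) :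
    (∀ U : Set Λ.Mor, Λ.IsGraphFilter U → Λ.ident (Λ.src lam) ∈ U →
      Λ.actBwd lam (Λ.actFwd lam U) = U) ∧
    (∀ V : Set Λ.Mor, Λ.IsGraphFilter V → lam ∈ V →
      Λ.actFwd lam (Λ.actBwd lam V) = V) :=
  stmt7_general Λ lam
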